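/- arXiv:1307.8341 — 4 statements merged into one kernel-verified Lean document; each statement's English description precedes it below -/
import Mathlib

section
/- The open upper half-plane {(x,y) ∈ ℝ² : y > 0} is the image of some polynomial map from ℝ² to ℝ². -/
/-- A polynomial map `ℝ² → ℝ²`: both coordinate functions are given by real
polynomials in two variables. -/
def IsPolyMap (f : ℝ × ℝ → ℝ × ℝ) : Prop :=
  ∃ p q : MvPolynomial (Fin 2) ℝ, ∀ v : ℝ × ℝ,
    f v = (MvPolynomial.eval ![v.1, v.2] p, MvPolynomial.eval ![v.1, v.2] q)

open Real

noncomputable def Fb (b y : ℝ) : ℝ := (y*(Real.sqrt (b*(1+y^2)-1)*y-1))/(1+y^2)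

lemma g_val (b y d : ℝ) (hd : d^2 = b*(1+y^2) - 1) :
    (((y+d)/(1+y^2))*y - 1)^2 + ((y+d)/(1+y^2))^2 = b := by
  have h : (0:ℝ) < 1 + y^2 := by positivity
  field_simp
  nlinarith [hd, sq_nonneg y, sq_nonneg d]

lemma phi_val (y d : ℝ) :
    y*(((y+d)/(1+y^2))*y - 1) = (y*(d*y-1))/(1+y^2) := by
  have h : (0:ℝ) < 1 + y^2 := by positivity
  rw [eq_div_iff h.ne']
  field_simp
  ring

lemma F_cont (b : ℝ) : Continuous (Fb b) := by
  apply Continuous.div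
  · fun_prop
  · fun_prop
  · intro y; positivity

-- realization: whenever discriminant nonneg, F b y is attained as phi on fiber g = b
lemma realize (b y : ℝ) (hD : 0 ≤ b*(1+y^2) - 1) :
    ∃ x : ℝ, (x*y-1)^2 + x^2 = b ∧ y*(x*y-1) = Fb b y := by
  refine ⟨(y + Real.sqrt (b*(1+y^2)-1))/(1+y^2), ?_, ?_⟩
  · exact g_val b y _ (Real.sq_sqrt hD)
  · exact phi_val y _

-- existence of large Y with F b Y ≥ a
lemma big (b a y0 : ℝ) (hb : 0 < b) : ∃ Y, y0 ≤ Y ∧ a ≤ Fb b Y := by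
  set c := Real.sqrt (b/2) with hc
  have hc2 : c^2 = b/2 := Real.sq_sqrt (by positivity)
  have hcpos : 0 < c := Real.sqrt_pos.2 (by positivity)
  refine ⟨max y0 (max 1 (max (Real.sqrt (2/b)) ((2*|a|+1)/c))), le_max_left _ _, ?_⟩
  set Y := max y0 (max 1 (max (Real.sqrt (2/b)) ((2*|a|+1)/c))) with hY
  have hY1 : 1 ≤ Y := le_trans (le_max_left _ _) (le_max_right _ _)
  have hYq : Real.sqrt (2/b) ≤ Y :=
    le_trans (le_trans (le_max_left _ _) (le_max_right _ _)) (le_max_right _ _)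
  have hYa : (2*|a|+1)/c ≤ Y :=
    le_trans (le_trans (le_max_right _ _) (le_max_right _ _)) (le_max_right _ _)
  have hY0 : 0 ≤ Y := by linarith
  have hY2 : 2/b ≤ Y^2 := by
    have := Real.sq_sqrt (le_of_lt (show (0:ℝ) < 2/b by positivity))
    nlinarith [Real.sqrt_nonneg (2/b)]
  have hca : 2*|a|+1 ≤ c*Y := by
    rw [div_le_iff₀ hcpos] at hYa; linarith [hYa]
  have h2b : 2 ≤ b*Y^2 := by
    rw [div_le_iff₀ hb] at hY2; linarith
  set s := Real.sqrt (b*(1+Y^2)-1) with hs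
  have hD : 0 ≤ b*(1+Y^2)-1 := by nlinarith [h2b]
  have hs2 : s^2 = b*(1+Y^2)-1 := Real.sq_sqrt hD
  have hsn : 0 ≤ s := Real.sqrt_nonneg _
  have hcy2 : (c*Y)^2 = b/2*Y^2 := by rw [mul_pow, hc2]
  have hsq : (c*Y)^2 ≤ s^2 := by rw [hcy2, hs2]; linarith
  have hscY : c*Y ≤ s := by nlinarith [hsq, mul_nonneg hcpos.le hY0, hsn]
  have habs : a ≤ |a| := le_abs_self a
  have habs0 : 0 ≤ |a| := abs_nonneg a
  rw [Fb, le_div_iff₀ (by positivity : (0:ℝ) < 1+Y^2)]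
  nlinarith [mul_le_mul_of_nonneg_right hscY (sq_nonneg Y),
    mul_le_mul_of_nonneg_right hca (sq_nonneg Y),
    mul_nonneg habs0 (by nlinarith : (0:ℝ) ≤ Y^2 - 1),
    mul_nonneg (sub_nonneg.2 habs) (by positivity : (0:ℝ) ≤ 1+Y^2),
    mul_nonneg (sub_nonneg.2 hY1) hY0]

noncomputable def ystar (b : ℝ) : ℝ := Real.sqrt (max 0 ((1-b)/b))

lemma ystar_nonneg (b : ℝ) : 0 ≤ ystar b := Real.sqrt_nonneg _

lemma ystar_sq (b : ℝ) : (ystar b)^2 = max 0 ((1-b)/b) :=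
  Real.sq_sqrt (le_max_left _ _)

lemma ystar_D (b : ℝ) (hb : 0 < b) : 0 ≤ b*(1+(ystar b)^2)-1 := by
  have h1 : (1-b)/b ≤ (ystar b)^2 := (ystar_sq b).symm ▸ le_max_right _ _
  have h2 : b*((1-b)/b) = 1-b := by field_simp
  nlinarith [mul_le_mul_of_nonneg_left h1 hb.le]

lemma branch (b a : ℝ) (hb : 0 < b) (ha : Fb b (ystar b) ≤ a) :
    ∃ x y : ℝ, (x*y-1)^2 + x^2 = b ∧ y*(x*y-1) = a := by
  obtain ⟨Y, hY0Y, hFY⟩ := big b a (ystar b) hb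
  have hIcc : a ∈ Set.Icc (Fb b (ystar b)) (Fb b Y) := ⟨ha, hFY⟩
  obtain ⟨y, hy, hFy⟩ := intermediate_value_Icc hY0Y (F_cont b).continuousOn hIcc
  have hD : 0 ≤ b*(1+y^2)-1 := by
    have h1 := ystar_D b hb
    have h2 := ystar_nonneg b
    nlinarith [hy.1]
  obtain ⟨x, hg, hphi⟩ := realize b y hD
  exact ⟨x, y, hg, by rw [hphi, hFy]⟩

lemma surj (a b : ℝ) (hb : 0 < b) :
    ∃ x y : ℝ, (x*y-1)^2 + x^2 = b ∧ y*(x*y-1) = a := by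
  have hkey : (ystar b) * Real.sqrt (b*(1+(ystar b)^2)-1) = 0 := by
    by_cases hb1 : b ≤ 1
    · have hnn : 0 ≤ (1-b)/b := div_nonneg (by linarith) hb.le
      have : (ystar b)^2 = (1-b)/b := by rw [ystar_sq, max_eq_right hnn]
      have hz : b*(1+(ystar b)^2)-1 = 0 := by
        rw [this]; field_simp; ring
      rw [hz, Real.sqrt_zero, mul_zero]
    · have hneg : (1-b)/b < 0 := div_neg_of_neg_of_pos (by linarith) hb
      have : ystar b = 0 := by
        rw [ystar, max_eq_left hneg.le, Real.sqrt_zero]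
      rw [this, zero_mul]
  have hsval : Fb b (ystar b) = -(ystar b)/(1+(ystar b)^2) := by
    rw [Fb]
    congr 1
    linear_combination ystar b * hkey
  have hsle : Fb b (ystar b) ≤ 0 := by
    rw [hsval]
    apply div_nonpos_of_nonpos_of_nonneg
    · linarith [ystar_nonneg b]
    · positivity
  by_cases ha : Fb b (ystar b) ≤ a
  · exact branch b a hb ha
  · push_neg at ha
    obtain ⟨x, y, hg, hphi⟩ := branch b (-a) hb (by linarith)
    refine ⟨-x, -y, by nlinarith [hg], by nlinarith [hphi]⟩

theorem stmt_2 :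
    ∃ f : ℝ × ℝ → ℝ × ℝ, IsPolyMap f ∧ Set.range f = {p : ℝ × ℝ | 0 < p.2} := by
  refine ⟨fun v => (v.2*(v.1*v.2-1), (v.1*v.2-1)^2 + v.1^2), ?_, ?_⟩
  · refine ⟨MvPolynomial.X 1 * (MvPolynomial.X 0 * MvPolynomial.X 1 - 1),
      (MvPolynomial.X 0 * MvPolynomial.X 1 - 1)^2 + (MvPolynomial.X 0)^2, ?_⟩
    intro v
    simp [MvPolynomial.eval_mul, MvPolynomial.eval_sub, MvPolynomial.eval_add,
      MvPolynomial.eval_pow, MvPolynomial.eval_X]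
  · ext ⟨u, v⟩
    simp only [Set.mem_range, Set.mem_setOf_eq]
    constructor
    · rintro ⟨⟨x, y⟩, h⟩
      have hv : v = (x*y-1)^2 + x^2 := by
        simpa using congrArg Prod.snd h.symm
      rw [hv]
      rcases eq_or_ne x 0 with hx | hx
      · simp [hx]
      · have : 0 < x^2 := by positivity
        nlinarith [sq_nonneg (x*y-1)]
    · intro hv
      obtain ⟨x, y, hg, hphi⟩ := surj u v hv
      exact ⟨(x, y), by simp [hphi, hg]⟩
end

section
/- Let S ⊆ ℝ × [0,∞) be a curtain, i.e., for each r ∈ ℝ the fiber S_r = S ∩ ({r} × ℝ) is empty, a closed ray {r} × [s_r, ∞), or an open ray {r} × (s_r, ∞) with s_r ≥ 0. Let g₁,…,g_k ∈ ℝ[x,y] with S = {g₁ ≥ 0 (or > 0), …, g_k ≥ 0 (or > 0)} (each gᵢ with either strict or non-strict inequality), such that for each nonempty fiber S_r with endpoint (r, s_r), some gᵢ vanishes at (r, s_r). Let c < d be reals such that no gᵢ is divisible by (x−r) for r ∈ (c,d), set φ = g₁⋯g_k, and define f : ℝ² → ℝ², f(x,y) = (x, y(1 + (x−c)(x−d)φ(x,y))²).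 Then f(S_r) = S_r for r ∈ π(S) \ (c,d), and f(S_r) = {r} × [0,∞) for r ∈ π(S) ∩ (c,d), where π(x,y) = x. Consequently f(S) = S ∪ ((π(S) ∩ (c,d)) × [0,∞)). -/
open Polynomial in
lemma aux_eval (r t : ℝ) (g : MvPolynomial (Fin 2) ℝ) :
    Polynomial.eval t (MvPolynomial.aeval ![Polynomial.C r, Polynomial.X] g)
      = MvPolynomial.eval ![r, t] g := by
  have h : (Polynomial.aeval t).comp (MvPolynomial.aeval ![Polynomial.C r, Polynomial.X])
      = (MvPolynomial.aeval ![r, t] : MvPolynomial (Fin 2) ℝ →ₐ[ℝ] ℝ) := by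
    apply MvPolynomial.algHom_ext
    intro i
    fin_cases i <;> simp
  have h2 := congrArg (fun F => F g) h
  simp only [AlgHom.comp_apply] at h2
  rw [← Polynomial.coe_aeval_eq_eval, ← MvPolynomial.coe_aeval_eq_eval]
  exact h2

lemma aux_sub_dvd (r : ℝ) (g : MvPolynomial (Fin 2) ℝ) :
    (MvPolynomial.X 0 - MvPolynomial.C r) ∣
      (g - MvPolynomial.aeval ![MvPolynomial.C r, MvPolynomial.X 1] g) := by
  induction g using MvPolynomial.induction_on with
  | C a => simp
  | add p q hp hq =>
    have := dvd_add hp hq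
    simpa [sub_add_sub_comm] using this
  | mul_X p i hp =>
    have key : p * MvPolynomial.X i -
        (MvPolynomial.aeval ![MvPolynomial.C r, MvPolynomial.X 1] p) *
          (![MvPolynomial.C r, MvPolynomial.X 1] i)
        = (p - MvPolynomial.aeval ![MvPolynomial.C r, MvPolynomial.X 1] p) * MvPolynomial.X i
          + (MvPolynomial.aeval ![MvPolynomial.C r, MvPolynomial.X 1] p) *
            (MvPolynomial.X i - ![MvPolynomial.C r, MvPolynomial.X 1] i) := by ring
    rw [map_mul, MvPolynomial.aeval_X, key]
    apply dvd_add
    · exact hp.mul_right _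
    · apply Dvd.dvd.mul_left
      fin_cases i
      · simp
      · simp

lemma aux_ne_zero (r : ℝ) (g : MvPolynomial (Fin 2) ℝ)
    (hg : ¬ (MvPolynomial.X 0 - MvPolynomial.C r ∣ g)) :
    MvPolynomial.aeval ![Polynomial.C r, Polynomial.X] g ≠ (0 : Polynomial ℝ) := by
  intro h0
  apply hg
  have hsub : MvPolynomial.aeval ![MvPolynomial.C r, MvPolynomial.X 1] g
      = Polynomial.aeval (MvPolynomial.X 1 : MvPolynomial (Fin 2) ℝ)
          (MvPolynomial.aeval ![Polynomial.C r, Polynomial.X] g) := by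
    have h : (MvPolynomial.aeval ![MvPolynomial.C r, MvPolynomial.X 1] :
        MvPolynomial (Fin 2) ℝ →ₐ[ℝ] MvPolynomial (Fin 2) ℝ)
        = (Polynomial.aeval (MvPolynomial.X 1 : MvPolynomial (Fin 2) ℝ)).comp
            (MvPolynomial.aeval ![Polynomial.C r, Polynomial.X]) := by
      apply MvPolynomial.algHom_ext
      intro i
      fin_cases i <;> simp
    exact congrArg (fun F => F g) h
  have := aux_sub_dvd r g
  rw [hsub, h0, map_zero, sub_zero] at this
  exact this

lemma aux_leading (s : ℝ) (q : Polynomial ℝ) (hq : q ≠ 0)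
    (h : ∀ t, s < t → 0 ≤ q.eval t) : 0 < q.leadingCoeff := by
  rcases lt_trichotomy q.leadingCoeff 0 with hlc | hlc | hlc
  · rcases le_or_gt q.degree 0 with hd | hd
    · have := Polynomial.eq_C_of_degree_le_zero hd
      have h1 := h (s + 1) (by linarith)
      rw [this] at h1
      simp only [Polynomial.eval_C] at h1
      have : q.leadingCoeff = q.coeff 0 := by
        rw [Polynomial.leadingCoeff]
        congr 1
        exact Polynomial.natDegree_eq_zero_iff_degree_le_zero.mpr hd
      linarith [this ▸ h1]
    · have ht := Polynomial.tendsto_atBot_of_leadingCoeff_nonpos q hd hlc.le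
      have := (ht.eventually (Filter.eventually_lt_atBot 0)).and
        (Filter.eventually_gt_atTop s)
      obtain ⟨t, h1, h2⟩ := this.exists
      linarith [h t h2]
  · exact absurd (Polynomial.leadingCoeff_eq_zero.mp hlc) hq
  · exact hlc

lemma fiberA (s : ℝ) (hs : 0 ≤ s) (A : ℝ) (hA : 0 ≤ A) (q : Polynomial ℝ)
    (hq0 : q.eval s = 0) (F : Set ℝ) (hF : F = Set.Ici s ∨ F = Set.Ioi s)
    (hpos : ∀ t ∈ F, 0 ≤ q.eval t) :
    (fun t => t * (1 + A * q.eval t) ^ 2) '' F = F := by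
  set h : ℝ → ℝ := fun t => t * (1 + A * q.eval t) ^ 2 with hh
  have hcont : Continuous h := by
    apply Continuous.mul continuous_id
    exact ((continuous_const.add (continuous_const.mul (q.continuous))).pow 2)
  have hsF : ∀ t ∈ F, s ≤ t := by
    rcases hF with h' | h' <;> (rw [h']; intro t ht)
    · exact ht
    · exact le_of_lt ht
  have hge : ∀ t ∈ F, t ≤ h t := by
    intro t ht
    have h0t : 0 ≤ t := le_trans hs (hsF t ht)
    have h1 : (1:ℝ) ≤ (1 + A * q.eval t) ^ 2 := by
      nlinarith [hpos t ht, mul_nonneg hA (hpos t ht)]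
    exact le_mul_of_one_le_right h0t h1
  have hhs' : h s = s := by simp [hh, hq0]
  apply Set.Subset.antisymm
  · rintro _ ⟨t, ht, rfl⟩
    rcases hF with h' | h' <;> rw [h'] at ht ⊢
    · exact le_trans ht (hge t (h' ▸ ht))
    · exact lt_of_lt_of_le ht (hge t (h' ▸ ht))
  · intro v hv
    have hsv : s ≤ v := hsF v hv
    have hvh : v ≤ h v := hge v hv
    have := intermediate_value_Icc hsv (hcont.continuousOn (s := Set.Icc s v))
    have hmem : v ∈ Set.Icc (h s) (h v) := ⟨by rw [hhs']; exact hsv, hvh⟩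
    obtain ⟨y, hy, hyv⟩ := this hmem
    refine ⟨y, ?_, hyv⟩
    rcases hF with h' | h' <;> rw [h']
    · exact hy.1
    · rcases eq_or_lt_of_le hy.1 with rfl | hlt
      · exfalso
        rw [h'] at hv
        rw [hhs'] at hyv
        exact absurd hyv.symm (ne_of_gt hv)
      · exact hlt

lemma fiberB (s : ℝ) (hs : 0 ≤ s) (A : ℝ) (hA : A < 0) (q : Polynomial ℝ) (hq : q ≠ 0)
    (hq0 : q.eval s = 0) (F : Set ℝ) (hF : F = Set.Ici s ∨ F = Set.Ioi s)
    (hpos : ∀ t, s < t → 0 ≤ q.eval t) :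
    (fun t => t * (1 + A * q.eval t) ^ 2) '' F = Set.Ici 0 := by
  set h : ℝ → ℝ := fun t => t * (1 + A * q.eval t) ^ 2 with hh
  have hcont : Continuous h := by
    apply Continuous.mul continuous_id
    exact ((continuous_const.add (continuous_const.mul (q.continuous))).pow 2)
  set P : ℝ → ℝ := fun t => 1 + A * q.eval t with hP
  have hPcont : Continuous P := continuous_const.add (continuous_const.mul q.continuous)
  have hlc : 0 < q.leadingCoeff := aux_leading s q hq hpos
  have hdeg : 0 < q.degree := by
    rcases lt_or_ge 0 q.degree with h' | h'
    · exact h'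
    · exfalso
      have := Polynomial.eq_C_of_degree_le_zero h'
      rw [this] at hq0
      simp only [Polynomial.eval_C] at hq0
      rw [this, hq0] at hq
      simp at hq
  -- P tendsto atBot
  have hqtop : Filter.Tendsto (fun t => q.eval t) Filter.atTop Filter.atTop :=
    q.tendsto_atTop_of_leadingCoeff_nonneg hdeg hlc.le
  have hPbot : Filter.Tendsto P Filter.atTop Filter.atBot := by
    have : Filter.Tendsto (fun t => A * q.eval t) Filter.atTop Filter.atBot :=
      Filter.Tendsto.const_mul_atTop_of_neg hA hqtop
    exact Filter.tendsto_atBot_add_const_left Filter.atTop 1 this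
  have hPs : P s = 1 := by simp [hP, hq0]
  -- find root t₀ of P with t₀ > s
  obtain ⟨T1, hT1neg, hT1gt⟩ :=
    ((hPbot.eventually (Filter.eventually_lt_atBot 0)).and
      (Filter.eventually_gt_atTop s)).exists
  have hivt := intermediate_value_Icc' hT1gt.le (hPcont.continuousOn (s := Set.Icc s T1))
  have h0mem : (0:ℝ) ∈ Set.Icc (P T1) (P s) := ⟨hT1neg.le, by rw [hPs]; norm_num⟩
  obtain ⟨t₀, ht₀mem, ht₀⟩ := hivt h0mem
  have ht₀gt : s < t₀ := by
    rcases eq_or_lt_of_le ht₀mem.1 with rfl | hlt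
    · rw [hPs] at ht₀; norm_num at ht₀
    · exact hlt
  have hht₀ : h t₀ = 0 := by
    show t₀ * (1 + A * Polynomial.eval t₀ q) ^ 2 = 0
    have : 1 + A * Polynomial.eval t₀ q = 0 := ht₀
    rw [this]; ring
  apply Set.Subset.antisymm
  · rintro _ ⟨t, ht, rfl⟩
    have h0t : 0 ≤ t := by
      rcases hF with h' | h' <;> rw [h'] at ht
      · exact le_trans hs ht
      · exact le_trans hs ht.le
    exact mul_nonneg h0t (sq_nonneg _)
  · intro v hv
    obtain ⟨T, ⟨hTP, hTge⟩⟩ :=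
      ((hPbot.eventually (Filter.eventually_le_atBot (-1))).and
        (Filter.eventually_ge_atTop (max v t₀))).exists
    have hTt₀ : t₀ ≤ T := le_trans (le_max_right _ _) hTge
    have hTv : v ≤ T := le_trans (le_max_left _ _) hTge
    have hhT : v ≤ h T := by
      have hP2 : (1:ℝ) ≤ (P T) ^ 2 := by nlinarith
      have h0T : 0 ≤ T := le_trans (le_trans hs ht₀gt.le) hTt₀
      calc v ≤ T := hTv
        _ = T * 1 := (mul_one T).symm
        _ ≤ T * (P T) ^ 2 := by nlinarith
        _ = h T := rfl
    have hivt2 := intermediate_value_Icc hTt₀ (hcont.continuousOn (s := Set.Icc t₀ T))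
    have hvmem : v ∈ Set.Icc (h t₀) (h T) := ⟨by rw [hht₀]; exact hv, hhT⟩
    obtain ⟨y, hy, hyv⟩ := hivt2 hvmem
    refine ⟨y, ?_, hyv⟩
    have hys : s < y := lt_of_lt_of_le ht₀gt hy.1
    rcases hF with h' | h' <;> rw [h']
    · exact hys.le
    · exact hys

/-- The vertical fiber of a planar set over `r`. -/
def fiber (S : Set (ℝ × ℝ)) (r : ℝ) : Set ℝ := {y | (r, y) ∈ S}

theorem stmt_5 (S : Set (ℝ × ℝ)) (hS : S ⊆ {p : ℝ × ℝ | 0 ≤ p.2})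
    (k : ℕ) (g : Fin k → MvPolynomial (Fin 2) ℝ) (strict : Fin k → Bool)
    (hSdef : S = {p : ℝ × ℝ | ∀ i, if strict i then
        0 < MvPolynomial.eval ![p.1, p.2] (g i)
      else 0 ≤ MvPolynomial.eval ![p.1, p.2] (g i)})
    (hfib : ∀ r : ℝ, fiber S r = ∅ ∨
      ∃ s : ℝ, 0 ≤ s ∧ (fiber S r = Set.Ici s ∨ fiber S r = Set.Ioi s))
    (hvanish : ∀ r s : ℝ, (fiber S r = Set.Ici s ∨ fiber S r = Set.Ioi s) →
      ∃ i, MvPolynomial.eval ![r, s] (g i) = 0)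
    (c d : ℝ) (hcd : c < d)
    (hdiv : ∀ i, ∀ r ∈ Set.Ioo c d,
      ¬ (MvPolynomial.X 0 - MvPolynomial.C r ∣ g i))
    (φ : ℝ × ℝ → ℝ) (hφ : φ = fun p => MvPolynomial.eval ![p.1, p.2] (∏ i, g i))
    (f : ℝ × ℝ → ℝ × ℝ)
    (hf : f = fun p => (p.1, p.2 * (1 + (p.1 - c) * (p.1 - d) * φ p) ^ 2)) :
    (∀ r ∈ Prod.fst '' S, r ∉ Set.Ioo c d →
      f '' (S ∩ {p | p.1 = r}) = S ∩ {p | p.1 = r}) ∧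
    (∀ r ∈ Prod.fst '' S, r ∈ Set.Ioo c d →
      f '' (S ∩ {p | p.1 = r}) = {r} ×ˢ Set.Ici (0 : ℝ)) ∧
    f '' S = S ∪ ((Prod.fst '' S ∩ Set.Ioo c d) ×ˢ Set.Ici (0 : ℝ)) := by
  classical
  set Q : ℝ → Polynomial ℝ :=
    fun r => ∏ i, MvPolynomial.aeval ![Polynomial.C r, Polynomial.X] (g i) with hQ
  have hφeval : ∀ r t : ℝ, φ (r, t) = Polynomial.eval t (Q r) := by
    intro r t
    rw [hφ, hQ]
    simp only [Polynomial.eval_prod]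
    rw [map_prod]
    exact Finset.prod_congr rfl fun i _ => (aux_eval r t (g i)).symm
  have hfeq : ∀ x y : ℝ, f (x, y)
      = (x, y * (1 + (x - c) * (x - d) * Polynomial.eval y (Q x)) ^ 2) := by
    intro x y
    rw [hf]
    dsimp only
    rw [hφeval]
  have hmemS : ∀ p : ℝ × ℝ, p ∈ S → ∀ i, 0 ≤ MvPolynomial.eval ![p.1, p.2] (g i) := by
    intro p hp i
    rw [hSdef] at hp
    have := hp i
    split at this
    · exact this.le
    · exact this
  have hfiber_prod : ∀ r, S ∩ {p | p.1 = r} = {r} ×ˢ fiber S r := by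
    intro r
    ext ⟨a, b⟩
    simp only [Set.mem_inter_iff, Set.mem_setOf_eq, Set.mem_prod, Set.mem_singleton_iff,
      fiber]
    constructor
    · rintro ⟨h1, rfl⟩; exact ⟨rfl, h1⟩
    · rintro ⟨rfl, h2⟩; exact ⟨h2, rfl⟩
  have himg : ∀ r, f '' (S ∩ {p | p.1 = r}) =
      {r} ×ˢ ((fun t => t * (1 + (r - c) * (r - d) * Polynomial.eval t (Q r)) ^ 2) ''
        fiber S r) := by
    intro r
    rw [hfiber_prod]
    ext ⟨a, b⟩
    constructor
    · rintro ⟨⟨x, y⟩, ⟨hx, hy⟩, heq⟩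
      dsimp only at hx hy
      rw [Set.mem_singleton_iff] at hx
      subst hx
      rw [hfeq, Prod.mk.injEq] at heq
      obtain ⟨h1, h2⟩ := heq
      subst h1; subst h2
      exact ⟨rfl, y, hy, rfl⟩
    · rintro ⟨ha, y, hy, hb⟩
      dsimp only at ha hy hb
      rw [Set.mem_singleton_iff] at ha
      refine ⟨(r, y), ⟨rfl, hy⟩, ?_⟩
      rw [hfeq, Prod.mk.injEq]
      exact ⟨ha.symm, hb⟩
  -- for each r in the image, gather the ray data for the fiber
  have hdata : ∀ r ∈ Prod.fst '' S, ∃ s : ℝ, 0 ≤ s ∧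
      (fiber S r = Set.Ici s ∨ fiber S r = Set.Ioi s) ∧
      Polynomial.eval s (Q r) = 0 ∧
      (∀ t ∈ fiber S r, 0 ≤ Polynomial.eval t (Q r)) ∧
      (∀ t, s < t → 0 ≤ Polynomial.eval t (Q r)) := by
    rintro r ⟨p, hp, rfl⟩
    have hne : (fiber S p.1).Nonempty := ⟨p.2, by simpa [fiber] using hp⟩
    rcases hfib p.1 with hemp | ⟨s, hs0, hF⟩
    · rw [hemp] at hne; exact absurd hne Set.not_nonempty_empty
    have hq0 : Polynomial.eval s (Q p.1) = 0 := by
      obtain ⟨i, hi⟩ := hvanish p.1 s hF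
      rw [hQ]
      simp only [Polynomial.eval_prod]
      exact Finset.prod_eq_zero (Finset.mem_univ i) (by rw [aux_eval]; exact hi)
    have hposF : ∀ t ∈ fiber S p.1, 0 ≤ Polynomial.eval t (Q p.1) := by
      intro t ht
      rw [hQ]
      simp only [Polynomial.eval_prod]
      apply Finset.prod_nonneg
      intro i _
      rw [aux_eval]
      exact hmemS (p.1, t) ht i
    have hposI : ∀ t, s < t → 0 ≤ Polynomial.eval t (Q p.1) := by
      intro t ht
      apply hposF
      rcases hF with h' | h' <;> rw [h']
      · exact ht.le
      · exact ht
    exact ⟨s, hs0, hF, hq0, hposF, hposI⟩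
  have part1 : ∀ r ∈ Prod.fst '' S, r ∉ Set.Ioo c d →
      f '' (S ∩ {p | p.1 = r}) = S ∩ {p | p.1 = r} := by
    intro r hr hnot
    obtain ⟨s, hs0, hF, hq0, hposF, _⟩ := hdata r hr
    have hA : 0 ≤ (r - c) * (r - d) := by
      simp only [Set.mem_Ioo, not_and, not_lt] at hnot
      rcases le_or_gt r c with h' | h'
      · nlinarith
      · have := hnot h'
        nlinarith
    rw [himg r, fiberA s hs0 _ hA (Q r) hq0 (fiber S r) hF hposF, ← hfiber_prod]
  have part2 : ∀ r ∈ Prod.fst '' S, r ∈ Set.Ioo c d →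
      f '' (S ∩ {p | p.1 = r}) = {r} ×ˢ Set.Ici (0 : ℝ) := by
    intro r hr hin
    obtain ⟨s, hs0, hF, hq0, _, hposI⟩ := hdata r hr
    have hA : (r - c) * (r - d) < 0 :=
      mul_neg_of_pos_of_neg (by linarith [hin.1]) (by linarith [hin.2])
    have hqne : Q r ≠ 0 := by
      rw [hQ]
      simp only
      rw [Finset.prod_ne_zero_iff]
      intro i _
      exact aux_ne_zero r (g i) (hdiv i r hin)
    rw [himg r, fiberB s hs0 _ hA (Q r) hqne hq0 (fiber S r) hF hposI]
  refine ⟨part1, part2, ?_⟩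
  ext ⟨a, b⟩
  constructor
  · rintro ⟨q, hq, heq⟩
    have hmem1 : q.1 ∈ Prod.fst '' S := ⟨q, hq, rfl⟩
    have hfp : (a, b) ∈ f '' (S ∩ {p | p.1 = q.1}) := ⟨q, ⟨hq, rfl⟩, heq⟩
    by_cases hio : q.1 ∈ Set.Ioo c d
    · right
      rw [part2 q.1 hmem1 hio] at hfp
      have h1 : a = q.1 := hfp.1
      exact ⟨⟨by rw [h1]; exact hmem1, by rw [h1]; exact hio⟩, hfp.2⟩
    · left
      rw [part1 q.1 hmem1 hio] at hfp
      exact hfp.1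
  · rintro (hin | ⟨⟨ha, hio⟩, hb⟩)
    · have hmem1 : a ∈ Prod.fst '' S := ⟨(a, b), hin, rfl⟩
      by_cases hio : a ∈ Set.Ioo c d
      · have h2 := part2 a hmem1 hio
        have hb : (a, b) ∈ ({a} : Set ℝ) ×ˢ Set.Ici (0 : ℝ) := ⟨rfl, hS hin⟩
        rw [← h2] at hb
        exact Set.image_mono (f := f) Set.inter_subset_left hb
      · have h1 := part1 a hmem1 hio
        have hb : (a, b) ∈ S ∩ {p | p.1 = a} := ⟨hin, rfl⟩
        rw [← h1] at hb
        exact Set.image_mono (f := f) Set.inter_subset_left hb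
    · have h2 := part2 a ha hio
      have hb' : (a, b) ∈ ({a} : Set ℝ) ×ˢ Set.Ici (0 : ℝ) := ⟨rfl, hb⟩
      rw [← h2] at hb'
      exact Set.image_mono (f := f) Set.inter_subset_left hb'
end

section
/- Let P₁ ⊆ {y ≥ 0} ⊆ ℝ² be an unbounded convex polygon that is a curtain, with defining one-degree polynomials ℓ₁,…,ℓ_{n−1} (so P₁ = {ℓ₁ ≥ 0, …, ℓ_{n−1} ≥ 0}) none of which is a multiple of x − r for any r, and suppose 0 = a < b are reals. Then the polynomial map f(x,y) = (x, y(1 + ℓ₁(x,y)⋯ℓ_{n−1}(x,y)·x·(x−b))²) satisfies f(P₁) = P₁ ∪ ((0,b) × [0,∞)). -/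
open MvPolynomial

lemma deg_class (d : Fin 2 →₀ ℕ) (h : d 0 + d 1 ≤ 1) :
    d = 0 ∨ d = Finsupp.single 0 1 ∨ d = Finsupp.single 1 1 := by
  have h1 : (d 0 = 0 ∧ d 1 = 0) ∨ (d 0 = 1 ∧ d 1 = 0) ∨ (d 0 = 0 ∧ d 1 = 1) := by omega
  rcases h1 with ⟨h0, h1⟩ | ⟨h0, h1⟩ | ⟨h0, h1⟩
  · left; ext i; fin_cases i <;> simpa
  · right; left; ext i; fin_cases i <;> simp [Finsupp.single_apply, h0, h1]
  · right; right; ext i; fin_cases i <;> simp [Finsupp.single_apply, h0, h1]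

lemma aux_decomp (q : MvPolynomial (Fin 2) ℝ) (hq : q.totalDegree ≤ 1) :
    q = C (q.coeff 0) + C (q.coeff (Finsupp.single 0 1)) * X 0
        + C (q.coeff (Finsupp.single 1 1)) * X 1 := by
  apply MvPolynomial.ext
  intro m
  have hsum : ∀ d : Fin 2 →₀ ℕ, (d.sum fun _ e => e) = d 0 + d 1 := by
    intro d
    rw [Finsupp.sum_fintype _ _ (fun _ => rfl), Fin.sum_univ_two]
  have hne0 : (Finsupp.single 0 1 : Fin 2 →₀ ℕ) ≠ 0 := by intro h; simpa using DFunLike.congr_fun h 0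
  have hne1 : (Finsupp.single 1 1 : Fin 2 →₀ ℕ) ≠ 0 := by intro h; simpa using DFunLike.congr_fun h 1
  have hne01 : (Finsupp.single 0 1 : Fin 2 →₀ ℕ) ≠ Finsupp.single 1 1 := by
    intro h
    have := DFunLike.congr_fun h 0
    simp [Finsupp.single_apply] at this
  by_cases h0 : m = 0
  · subst h0
    simp [coeff_C_mul, coeff_X', hne0.symm, hne1.symm, MvPolynomial.coeff_zero_C]
  by_cases hx : m = Finsupp.single 0 1
  · subst hx
    simp [coeff_C_mul, coeff_X', coeff_C, hne0, hne01.symm, hne0.symm]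
  by_cases hy : m = Finsupp.single 1 1
  · subst hy
    simp [coeff_C_mul, coeff_X', coeff_C, hne1, hne01, hne1.symm]
  · have hm : q.coeff m = 0 := by
      by_contra hc
      have hmem : m ∈ q.support := by simpa [MvPolynomial.mem_support_iff] using hc
      have := le_totalDegree hmem
      rw [hsum] at this
      rcases deg_class m (this.trans hq) with h | h | h <;> [exact h0 h; exact hx h; exact hy h]
    have hx' : (Finsupp.single 0 1 : Fin 2 →₀ ℕ) ≠ m := fun h => hx h.symm
    have hy' : (Finsupp.single 1 1 : Fin 2 →₀ ℕ) ≠ m := fun h => hy h.symm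
    simp [hm, coeff_C_mul, coeff_X', coeff_C, Ne.symm h0, hx', hy']


lemma aux_affine (q : MvPolynomial (Fin 2) ℝ) (hq : q.totalDegree ≤ 1) (x y : ℝ) :
    MvPolynomial.eval ![x, y] q
      = (q.coeff 0 + q.coeff (Finsupp.single 0 1) * x) + q.coeff (Finsupp.single 1 1) * y := by
  conv_lhs => rw [aux_decomp q hq]
  simp

lemma aux_div (q : MvPolynomial (Fin 2) ℝ) (hq : q.totalDegree ≤ 1) (x : ℝ)
    (h1 : q.coeff (Finsupp.single 1 1) = 0)
    (h0 : q.coeff 0 + q.coeff (Finsupp.single 0 1) * x = 0) :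
    (X 0 - C x : MvPolynomial (Fin 2) ℝ) ∣ q := by
  refine ⟨C (q.coeff (Finsupp.single 0 1)), ?_⟩
  conv_lhs => rw [aux_decomp q hq]
  rw [h1]
  have : q.coeff 0 = -(q.coeff (Finsupp.single 0 1) * x) := by linarith
  rw [this]
  ring_nf
  rw [mul_comm]
  ring_nf
  simp [MvPolynomial.C_mul, MvPolynomial.C_neg]
  ring

lemma exists_big {n : ℕ} (A Cc : Fin n → ℝ) (s : ℝ)
    (h0 : ∀ i, ∀ y : ℝ, s ≤ y → 0 ≤ Cc i + A i * y)
    (hpos : ∀ i, A i = 0 → 0 < Cc i)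
    (j : Fin n) (hj : A j ≠ 0) (M y0 : ℝ) :
    ∃ y, y0 ≤ y ∧ s ≤ y ∧ M ≤ ∏ i, (Cc i + A i * y) := by
  have hAnn : ∀ i, 0 ≤ A i := by
    intro i
    by_contra hc
    push_neg at hc
    set y := max s ((Cc i + 1) / (-A i)) with hy
    have h1 : 0 ≤ Cc i + A i * y := h0 i y (le_max_left _ _)
    have h2 : (Cc i + 1) / (-A i) ≤ y := le_max_right _ _
    have h3 : A i * y ≤ A i * ((Cc i + 1) / (-A i)) := by
      apply mul_le_mul_of_nonpos_left h2 hc.le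
    have hne : A i ≠ 0 := ne_of_lt hc
    have h4 : A i * ((Cc i + 1) / (-A i)) = -(Cc i + 1) := by
      rw [div_neg, mul_neg, mul_div_cancel₀ _ hne]
    linarith
  have hAj : 0 < A j := lt_of_le_of_ne (hAnn j) (Ne.symm hj)
  set w : Fin n → ℝ := fun i => if A i = 0 then Cc i else A i with hw
  have hwpos : ∀ i, 0 < w i := by
    intro i
    by_cases h : A i = 0 <;> simp [hw, h]
    · exact hpos i h
    · exact lt_of_le_of_ne (hAnn i) (Ne.symm h)
  set K : ℝ := ∏ i ∈ Finset.univ.erase j, w i with hK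
  have hKpos : 0 < K := Finset.prod_pos fun i _ => hwpos i
  set c := A j * K with hc
  have hcpos : 0 < c := mul_pos hAj hKpos
  set y : ℝ := max (max y0 (s + 1)) (s + (max M 0 + 1) / c) with hydef
  have hy0 : y0 ≤ y := le_trans (le_max_left _ _) (le_max_left _ _)
  have hys1 : s + 1 ≤ y := le_trans (le_max_right _ _) (le_max_left _ _)
  have hys : s ≤ y := by linarith
  have hyM : s + (max M 0 + 1) / c ≤ y := le_max_right _ _
  refine ⟨y, hy0, hys, ?_⟩
  have hbound : ∀ i ∈ Finset.univ, (0:ℝ) ≤ (if i = j then A j * (y - s) else w i)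
      ∧ (if i = j then A j * (y - s) else w i) ≤ Cc i + A i * y := by
    intro i _
    by_cases hij : i = j
    · rw [hij, if_pos rfl]
      constructor
      · nlinarith [hAj]
      · nlinarith [h0 j s le_rfl, hAj]
    · rw [if_neg hij]
      refine ⟨(hwpos i).le, ?_⟩
      by_cases h : A i = 0
      · simp only [hw, if_pos h, h]
        linarith
      · simp only [hw, if_neg h]
        have hAi : 0 < A i := lt_of_le_of_ne (hAnn i) (Ne.symm h)
        nlinarith [h0 i s le_rfl]
  have hprodle : ∏ i, (if i = j then A j * (y - s) else w i) ≤ ∏ i, (Cc i + A i * y) :=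
    Finset.prod_le_prod (fun i hi => (hbound i hi).1) (fun i hi => (hbound i hi).2)
  have hprodeq : ∏ i, (if i = j then A j * (y - s) else w i) = A j * (y - s) * K := by
    rw [← Finset.mul_prod_erase Finset.univ _ (Finset.mem_univ j)]
    simp only [if_pos rfl]
    congr 1
    apply Finset.prod_congr rfl
    intro i hi
    rw [if_neg (Finset.ne_of_mem_erase hi)]
  have hcy : max M 0 + 1 ≤ c * (y - s) := by
    have h1 : (max M 0 + 1) / c ≤ y - s := by linarith
    calc max M 0 + 1 = c * ((max M 0 + 1) / c) := by field_simp
    _ ≤ c * (y - s) := by apply mul_le_mul_of_nonneg_left h1 hcpos.le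
  have : M ≤ c * (y - s) := le_trans (by have := le_max_left M 0; linarith) hcy
  calc M ≤ c * (y - s) := this
  _ = A j * (y - s) * K := by rw [hc]; ring
  _ = ∏ i, (if i = j then A j * (y - s) else w i) := hprodeq.symm
  _ ≤ ∏ i, (Cc i + A i * y) := hprodle

theorem stmt_12 (n : ℕ) (ℓ : Fin n → MvPolynomial (Fin 2) ℝ)
    (hdeg : ∀ i, (ℓ i).totalDegree = 1)
    (P₁ : Set (ℝ × ℝ))
    (hP : P₁ = {p : ℝ × ℝ | ∀ i, 0 ≤ MvPolynomial.eval ![p.1, p.2] (ℓ i)})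
    (hsub : P₁ ⊆ {p : ℝ × ℝ | 0 ≤ p.2})
    (hfib : ∀ r : ℝ, {y : ℝ | (r, y) ∈ P₁} = ∅ ∨
      ∃ s : ℝ, 0 ≤ s ∧ {y : ℝ | (r, y) ∈ P₁} = Set.Ici s)
    (hvan : ∀ r s : ℝ, {y : ℝ | (r, y) ∈ P₁} = Set.Ici s →
      ∃ i, MvPolynomial.eval ![r, s] (ℓ i) = 0)
    (hdiv : ∀ i, ∀ r : ℝ, ¬ (MvPolynomial.X 0 - MvPolynomial.C r ∣ ℓ i))
    (b : ℝ) (hb : 0 < b)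
    (hproj : Set.Ioo (0 : ℝ) b ⊆ Prod.fst '' P₁) :
    (fun p : ℝ × ℝ => (p.1, p.2 *
        (1 + MvPolynomial.eval ![p.1, p.2] (∏ i, ℓ i) * p.1 * (p.1 - b)) ^ 2)) '' P₁
      = P₁ ∪ (Set.Ioo (0 : ℝ) b ×ˢ Set.Ici (0 : ℝ)) := by
  classical
  have hdeg' : ∀ i, (ℓ i).totalDegree ≤ 1 := fun i => (hdeg i).le
  set A : Fin n → ℝ := fun i => (ℓ i).coeff (Finsupp.single 1 1) with hA
  set B : Fin n → ℝ → ℝ := fun i x => (ℓ i).coeff 0 + (ℓ i).coeff (Finsupp.single 0 1) * x with hB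
  have hEval : ∀ i (x y : ℝ), MvPolynomial.eval ![x, y] (ℓ i) = B i x + A i * y :=
    fun i x y => aux_affine (ℓ i) (hdeg' i) x y
  have hProd : ∀ x y : ℝ, MvPolynomial.eval ![x, y] (∏ i, ℓ i) = ∏ i, (B i x + A i * y) := by
    intro x y
    rw [map_prod]
    exact Finset.prod_congr rfl fun i _ => hEval i x y
  have hmem : ∀ x y : ℝ, (x, y) ∈ P₁ ↔ ∀ i, 0 ≤ B i x + A i * y := by
    intro x y
    rw [hP]
    simp only [Set.mem_setOf_eq]
    exact forall_congr' fun i => by rw [hEval i x y]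
  have fiber : ∀ x s : ℝ, ({y : ℝ | (x, y) ∈ P₁} = Set.Ici s) →
      ∀ y : ℝ, s ≤ y ↔ ∀ i, 0 ≤ B i x + A i * y := by
    intro x s hxs y
    rw [← hmem x y]
    have := Set.ext_iff.mp hxs y
    simp only [Set.mem_setOf_eq, Set.mem_Ici] at this
    exact this.symm
  have hucont : ∀ x : ℝ, Continuous fun y : ℝ =>
      1 + (∏ i, (B i x + A i * y)) * x * (x - b) := by
    intro x
    apply continuous_const.add
    apply Continuous.mul _ continuous_const
    apply Continuous.mul _ continuous_const
    apply continuous_finset_prod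
    intro i _
    exact continuous_const.add (continuous_const.mul continuous_id)
  have hHcont : ∀ x : ℝ, Continuous fun y : ℝ =>
      y * (1 + (∏ i, (B i x + A i * y)) * x * (x - b)) ^ 2 := by
    intro x
    exact continuous_id.mul ((hucont x).pow 2)
  have hGs0 : ∀ x s : ℝ, ({y : ℝ | (x, y) ∈ P₁} = Set.Ici s) →
      (∏ i, (B i x + A i * s)) = 0 := by
    intro x s hxs
    obtain ⟨i, hi⟩ := hvan x s hxs
    rw [hEval i x s] at hi
    exact Finset.prod_eq_zero (Finset.mem_univ i) hi
  -- Key surjectivity lemma for fibers over (0, b)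
  have key2 : ∀ x s t : ℝ, ({y : ℝ | (x, y) ∈ P₁} = Set.Ici s) → 0 < x → x < b → 0 ≤ t →
      ∃ y, (x, y) ∈ P₁ ∧ y * (1 + (∏ i, (B i x + A i * y)) * x * (x - b)) ^ 2 = t := by
    intro x s t hxs hx hxb ht
    have hfib' := fiber x s hxs
    have h0 : ∀ i, ∀ y : ℝ, s ≤ y → 0 ≤ B i x + A i * y := fun i y hy => (hfib' y).mp hy i
    have hposC : ∀ i, A i = 0 → 0 < B i x := by
      intro i hAi
      have hge : 0 ≤ B i x := by
        have := h0 i s le_rfl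
        rw [hAi] at this
        linarith
      rcases hge.lt_or_eq with h | h
      · exact h
      · exfalso
        exact hdiv i x (aux_div (ℓ i) (hdeg' i) x hAi h.symm)
    have hjex : ∃ j, A j ≠ 0 := by
      by_contra hc
      push_neg at hc
      have h1 : s ≤ s - 1 := by
        rw [hfib' (s - 1)]
        intro i
        have := h0 i s le_rfl
        rw [hc i] at this ⊢
        linarith
      linarith
    obtain ⟨j, hj⟩ := hjex
    have hDneg : x * (x - b) < 0 := mul_neg_of_pos_of_neg hx (by linarith)
    -- first find a zero of the multiplier
    obtain ⟨y1, _, hy1s, hy1G⟩ := exists_big A (fun i => B i x) s h0 hposC j hj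
      (1 / (-(x * (x - b)))) s
    have hu1 : 1 + (∏ i, (B i x + A i * y1)) * x * (x - b) ≤ 0 := by
      have hDne : x * (x - b) ≠ 0 := ne_of_lt hDneg
      have hinv : (1 / (-(x * (x - b)))) * (-(x * (x - b))) = 1 := by
        field_simp
        exact div_self (sub_ne_zero.mpr (ne_of_lt hxb))
      nlinarith [mul_le_mul_of_nonneg_right hy1G (by linarith : (0:ℝ) ≤ -(x * (x - b)))]
    have hzero : ∃ y0, y0 ∈ Set.Icc s y1 ∧
        1 + (∏ i, (B i x + A i * y0)) * x * (x - b) = 0 := by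
      have himg := intermediate_value_Icc' hy1s (hucont x).continuousOn
      have h01 : (0:ℝ) ∈ Set.Icc (1 + (∏ i, (B i x + A i * y1)) * x * (x - b))
          (1 + (∏ i, (B i x + A i * s)) * x * (x - b)) := by
        rw [hGs0 x s hxs]
        constructor
        · exact hu1
        · norm_num
      obtain ⟨y0, hy0mem, hy0⟩ := himg h01
      exact ⟨y0, hy0mem, hy0⟩
    obtain ⟨y0, hy0mem, hy0⟩ := hzero
    -- now find a point where H is large
    obtain ⟨y2, hy2a, hy2s, hy2G⟩ := exists_big A (fun i => B i x) s h0 hposC j hj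
      (2 / (-(x * (x - b)))) (max y0 t)
    have hu2 : 1 + (∏ i, (B i x + A i * y2)) * x * (x - b) ≤ -1 := by
      have hDne : x * (x - b) ≠ 0 := ne_of_lt hDneg
      have hinv : (2 / (-(x * (x - b)))) * (-(x * (x - b))) = 2 := by
        field_simp
        exact div_self (sub_ne_zero.mpr (ne_of_lt hxb))
      nlinarith [mul_le_mul_of_nonneg_right hy2G (by linarith : (0:ℝ) ≤ -(x * (x - b)))]
    have hy2t : t ≤ y2 := le_trans (le_max_right _ _) hy2a
    have hy20 : 0 ≤ y2 := le_trans ht hy2t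
    have hsq2 : 1 ≤ (1 + (∏ i, (B i x + A i * y2)) * x * (x - b)) ^ 2 := by
      nlinarith [hu2]
    have hH2 : t ≤ y2 * (1 + (∏ i, (B i x + A i * y2)) * x * (x - b)) ^ 2 := by
      calc t ≤ y2 := hy2t
      _ = y2 * 1 := (mul_one _).symm
      _ ≤ y2 * (1 + (∏ i, (B i x + A i * y2)) * x * (x - b)) ^ 2 :=
        mul_le_mul_of_nonneg_left hsq2 hy20
    have hy02 : y0 ≤ y2 := le_trans (le_max_left _ _) hy2a
    have himg := intermediate_value_Icc hy02 (hHcont x).continuousOn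
    have htmem : t ∈ Set.Icc (y0 * (1 + (∏ i, (B i x + A i * y0)) * x * (x - b)) ^ 2)
        (y2 * (1 + (∏ i, (B i x + A i * y2)) * x * (x - b)) ^ 2) := by
      rw [hy0]
      constructor
      · simpa using ht
      · exact hH2
    obtain ⟨y3, hy3mem, hy3⟩ := himg htmem
    refine ⟨y3, ?_, hy3⟩
    have hsy3 : s ≤ y3 := le_trans hy0mem.1 hy3mem.1
    exact (hmem x y3).mpr ((hfib' y3).mp hsy3)
  -- Key surjectivity lemma for fibers over the complement of (0, b)
  have key1 : ∀ x s t : ℝ, ({y : ℝ | (x, y) ∈ P₁} = Set.Ici s) → 0 ≤ s →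
      ¬(0 < x ∧ x < b) → s ≤ t →
      ∃ y, (x, y) ∈ P₁ ∧ y * (1 + (∏ i, (B i x + A i * y)) * x * (x - b)) ^ 2 = t := by
    intro x s t hxs hs0 hx hst
    have hfib' := fiber x s hxs
    have hxor : x ≤ 0 ∨ b ≤ x := by
      rcases lt_or_ge 0 x with h | h
      · rcases lt_or_ge x b with h2 | h2
        · exact absurd ⟨h, h2⟩ hx
        · exact Or.inr h2
      · exact Or.inl h
    have hxx : 0 ≤ x * (x - b) := by
      rcases hxor with h | h <;> nlinarith
    have hGt : 0 ≤ ∏ i, (B i x + A i * t) :=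
      Finset.prod_nonneg fun i _ => (hfib' t).mp hst i
    have ht0 : 0 ≤ t := le_trans hs0 hst
    have hsqt : 1 ≤ (1 + (∏ i, (B i x + A i * t)) * x * (x - b)) ^ 2 := by
      nlinarith [mul_nonneg hGt hxx]
    have hHt : t ≤ t * (1 + (∏ i, (B i x + A i * t)) * x * (x - b)) ^ 2 := by
      calc t = t * 1 := (mul_one _).symm
      _ ≤ t * (1 + (∏ i, (B i x + A i * t)) * x * (x - b)) ^ 2 :=
        mul_le_mul_of_nonneg_left hsqt ht0
    have himg := intermediate_value_Icc hst (hHcont x).continuousOn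
    have htmem : t ∈ Set.Icc (s * (1 + (∏ i, (B i x + A i * s)) * x * (x - b)) ^ 2)
        (t * (1 + (∏ i, (B i x + A i * t)) * x * (x - b)) ^ 2) := by
      rw [hGs0 x s hxs]
      constructor
      · simpa using hst
      · exact hHt
    obtain ⟨y3, hy3mem, hy3⟩ := himg htmem
    refine ⟨y3, ?_, hy3⟩
    exact (hmem x y3).mpr ((hfib' y3).mp hy3mem.1)
  -- Main set equality
  ext p
  constructor
  · rintro ⟨q, hq, rfl⟩
    obtain ⟨x, y⟩ := q
    dsimp only
    rw [hProd x y]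
    by_cases hx : x ∈ Set.Ioo (0 : ℝ) b
    · right
      refine ⟨hx, ?_⟩
      have hy0 : 0 ≤ y := hsub hq
      exact mul_nonneg hy0 (sq_nonneg _)
    · left
      rcases hfib x with hemp | ⟨s, hs0, hIci⟩
      · exfalso
        have : y ∈ {y : ℝ | (x, y) ∈ P₁} := hq
        rw [hemp] at this
        exact this
      · have hys : s ≤ y := by
          have : y ∈ {y : ℝ | (x, y) ∈ P₁} := hq
          rw [hIci] at this
          exact this
        have hy0 : 0 ≤ y := hsub hq
        have hGnn : 0 ≤ ∏ i, (B i x + A i * y) :=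
          Finset.prod_nonneg fun i _ => (hmem x y).mp hq i
        have hxor : x ≤ 0 ∨ b ≤ x := by
          rcases lt_or_ge 0 x with h | h
          · rcases lt_or_ge x b with h2 | h2
            · exact absurd (Set.mem_Ioo.mpr ⟨h, h2⟩) hx
            · exact Or.inr h2
          · exact Or.inl h
        have hxx : 0 ≤ x * (x - b) := by
          rcases hxor with h | h <;> nlinarith
        have hsqy : 1 ≤ (1 + (∏ i, (B i x + A i * y)) * x * (x - b)) ^ 2 := by
          nlinarith [mul_nonneg hGnn hxx]
        have hval : s ≤ y * (1 + (∏ i, (B i x + A i * y)) * x * (x - b)) ^ 2 := by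
          calc s ≤ y := hys
          _ = y * 1 := (mul_one _).symm
          _ ≤ y * (1 + (∏ i, (B i x + A i * y)) * x * (x - b)) ^ 2 :=
            mul_le_mul_of_nonneg_left hsqy hy0
        have : (y * (1 + (∏ i, (B i x + A i * y)) * x * (x - b)) ^ 2) ∈ Set.Ici s := hval
        rw [← hIci] at this
        exact this
  · rintro (hp | hp)
    · rcases hfib p.1 with hemp | ⟨s, hs0, hIci⟩
      · exfalso
        have : p.2 ∈ {y : ℝ | (p.1, y) ∈ P₁} := by simpa using hp
        rw [hemp] at this
        exact this
      · by_cases hx : 0 < p.1 ∧ p.1 < b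
        · have ht : 0 ≤ p.2 := hsub hp
          obtain ⟨y, hyP, hy⟩ := key2 p.1 s p.2 hIci hx.1 hx.2 ht
          refine ⟨(p.1, y), hyP, ?_⟩
          dsimp only
          rw [hProd p.1 y, hy]
        · have hst : s ≤ p.2 := by
            have : p.2 ∈ {y : ℝ | (p.1, y) ∈ P₁} := by simpa using hp
            rw [hIci] at this
            exact this
          obtain ⟨y, hyP, hy⟩ := key1 p.1 s p.2 hIci hs0 hx hst
          refine ⟨(p.1, y), hyP, ?_⟩
          dsimp only
          rw [hProd p.1 y, hy]
    · obtain ⟨hp1, hp2⟩ := hp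
      obtain ⟨q, hqP, hq1⟩ := hproj hp1
      rcases hfib p.1 with hemp | ⟨s, hs0, hIci⟩
      · exfalso
        have : q.2 ∈ {y : ℝ | (p.1, y) ∈ P₁} := by
          simp only [Set.mem_setOf_eq]
          rw [show (p.1, q.2) = q from Prod.ext hq1.symm rfl] at *
          exact hqP
        rw [hemp] at this
        exact this
      · obtain ⟨y, hyP, hy⟩ := key2 p.1 s p.2 hIci hp1.1 hp1.2 hp2
        refine ⟨(p.1, y), hyP, ?_⟩
        dsimp only
        rw [hProd p.1 y, hy]
end

section
/- Let γ(t) = 1 + ψ·φ(t) where ψ < 0 is a real constant and φ ∈ ℝ[t] is a nonconstant polynomial with positive leading coefficient; suppose γ(s) = 1 for some s ≥ 0. Then the function h(t) = γ(t)²·t satisfies: h(s) = s, h ≥ 0 on [s,∞), there exists t₀ > s with h(t₀) = 0, and h([s,∞)) = [0,∞). The same conclusion holds with [s,∞) replaced by the open ray (s,∞), i.e., h((s,∞)) = [0,∞). -/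
theorem stmt_14 (ψ : ℝ) (hψ : ψ < 0) (φ : Polynomial ℝ)
    (hnc : 0 < φ.natDegree) (hlc : 0 < φ.leadingCoeff)
    (s : ℝ) (hs : 0 ≤ s) (hγs : 1 + ψ * φ.eval s = 1)
    (h : ℝ → ℝ) (hh : h = fun t => (1 + ψ * φ.eval t) ^ 2 * t) :
    h s = s ∧ (∀ t ∈ Set.Ici s, 0 ≤ h t) ∧ (∃ t₀ > s, h t₀ = 0) ∧
      h '' Set.Ici s = Set.Ici 0 ∧ h '' Set.Ioi s = Set.Ici 0 := by
  subst hh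
  set γ : ℝ → ℝ := fun t => 1 + ψ * φ.eval t with hγ
  have hγcont : Continuous γ := continuous_const.add (continuous_const.mul φ.continuous)
  have hcont : Continuous fun t => γ t ^ 2 * t := (hγcont.pow 2).mul continuous_id
  have hγss : γ s = 1 := hγs
  have hhs : γ s ^ 2 * s = s := by rw [hγss]; ring
  have hdeg : 0 < φ.degree := Polynomial.natDegree_pos_iff_degree_pos.mp hnc
  have hφtop : Filter.Tendsto (fun t => φ.eval t) Filter.atTop Filter.atTop :=
    φ.tendsto_atTop_of_leadingCoeff_nonneg hdeg hlc.le
  have hγbot : Filter.Tendsto γ Filter.atTop Filter.atBot := by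
    have h1 : Filter.Tendsto (fun t => ψ * φ.eval t) Filter.atTop Filter.atBot :=
      (Filter.tendsto_const_mul_atBot_of_neg hψ).mpr hφtop
    simpa [hγ] using Filter.tendsto_atBot_add_const_left Filter.atTop (1:ℝ) h1
  -- nonnegativity
  have hnonneg : ∀ t ∈ Set.Ici s, 0 ≤ γ t ^ 2 * t := fun t ht =>
    mul_nonneg (sq_nonneg _) (le_trans hs ht)
  -- find t₀ > s with γ t₀ = 0
  have hb : ∃ b > s, γ b < 0 := by
    have h1 : ∀ᶠ b in Filter.atTop, γ b < 0 := hγbot.eventually (Filter.eventually_lt_atBot 0)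
    have h2 : ∀ᶠ b in Filter.atTop, b > s := Filter.eventually_gt_atTop s
    rcases (h1.and h2).exists with ⟨b, hb1, hb2⟩
    exact ⟨b, hb2, hb1⟩
  obtain ⟨b, hbs, hbneg⟩ := hb
  have hivt : (0:ℝ) ∈ γ '' Set.Icc s b := by
    apply intermediate_value_Icc' hbs.le (hγcont.continuousOn)
    constructor
    · exact hbneg.le
    · rw [hγss]; norm_num
  obtain ⟨t₀, ht₀mem, ht₀⟩ := hivt
  have ht₀s : s < t₀ := by
    rcases lt_or_eq_of_le ht₀mem.1 with h' | h'
    · exact h'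
    · exfalso; rw [← h', hγss] at ht₀; norm_num at ht₀
  have hht₀ : γ t₀ ^ 2 * t₀ = 0 := by rw [ht₀]; ring
  -- h tends to atTop
  have htop : Filter.Tendsto (fun t => γ t ^ 2 * t) Filter.atTop Filter.atTop := by
    have hsq : Filter.Tendsto (fun t => γ t ^ 2) Filter.atTop Filter.atTop := by
      have : Filter.Tendsto (fun t => -γ t) Filter.atTop Filter.atTop := by
        rw [Filter.tendsto_neg_atTop_iff]; exact hγbot
      have h2 : Filter.Tendsto (fun t => (-γ t) ^ 2) Filter.atTop Filter.atTop :=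
        this.atTop_mul_atTop₀ this |>.congr (fun t => (sq (-γ t)).symm)
      simpa [neg_pow] using h2
    exact hsq.atTop_mul_atTop₀ Filter.tendsto_id
  -- surjectivity onto [0,∞) via (s,∞)
  have himIoi : (fun t => γ t ^ 2 * t) '' Set.Ioi s = Set.Ici 0 := by
    apply Set.Subset.antisymm
    · rintro y ⟨t, ht, rfl⟩
      exact hnonneg t (Set.mem_Ici.mpr (le_of_lt ht))
    · intro y hy
      have : ∀ᶠ c in Filter.atTop, y ≤ γ c ^ 2 * c := htop.eventually_ge_atTop y
      rcases (this.and (Filter.eventually_ge_atTop t₀)).exists with ⟨c, hc1, hc2⟩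
      have : y ∈ (fun t => γ t ^ 2 * t) '' Set.Icc t₀ c := by
        apply intermediate_value_Icc hc2 (hcont.continuousOn)
        exact ⟨by rw [hht₀]; exact hy, hc1⟩
      obtain ⟨t, htmem, ht⟩ := this
      exact ⟨t, lt_of_lt_of_le ht₀s htmem.1, ht⟩
  have himIci : (fun t => γ t ^ 2 * t) '' Set.Ici s = Set.Ici 0 := by
    apply Set.Subset.antisymm
    · rintro y ⟨t, ht, rfl⟩
      exact hnonneg t ht
    · rw [← himIoi]
      exact Set.image_mono (Set.Ioi_subset_Ici_self)
  exact ⟨hhs, hnonneg, ⟨t₀, ht₀s, hht₀⟩, himIci, himIoi⟩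
end
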